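/- Let Γ be an amenable group, S ⊆ Γ a finite subset, and ε > 0. Then there exists a nonempty finite subset A ⊆ Γ such that for every x ∈ S, the cardinality of the symmetric difference of xA and A is at most ε times the cardinality of A. -/
import Mathlib


open Pointwise

lemma sum_measure_aux {Γ ι : Type*} [DecidableEq ι] (μ : Set Γ → ℝ)
    (h0 : μ ∅ = 0)
    (hadd : ∀ A B : Set Γ, Disjoint A B → μ (A ∪ B) = μ A + μ B)
    (s : Finset ι) (E : ι → Set Γ)
    (hdisj : ∀ i ∈ s, ∀ j ∈ s, i ≠ j → Disjoint (E i) (E j)) :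
    μ (⋃ i ∈ s, E i) = ∑ i ∈ s, μ (E i) := by
  induction s using Finset.induction_on with
  | empty => simpa using h0
  | @insert a s ha ih =>
    rw [Finset.sum_insert ha]
    have hd : Disjoint (E a) (⋃ i ∈ s, E i) := by
      rw [Set.disjoint_iUnion₂_right]
      intro i hi
      exact hdisj a (Finset.mem_insert_self a s) i (Finset.mem_insert_of_mem hi)
        (by rintro rfl; exact ha hi)
    have : (⋃ i ∈ insert a s, E i) = E a ∪ ⋃ i ∈ s, E i := by simp
    rw [this, hadd _ _ hd, ih (fun i hi j hj hij =>
      hdisj i (Finset.mem_insert_of_mem hi) j (Finset.mem_insert_of_mem hj) hij)]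

/-- A (discrete) group is amenable if it admits a left-invariant, finitely
additive probability measure defined on all subsets. -/
def IsAmenable (Γ : Type*) [Group Γ] : Prop :=
  ∃ μ : Set Γ → ℝ,
    μ Set.univ = 1 ∧
    (∀ A : Set Γ, 0 ≤ μ A) ∧
    (∀ A B : Set Γ, Disjoint A B → μ (A ∪ B) = μ A + μ B) ∧
    (∀ (g : Γ) (A : Set Γ), μ ((fun a => g * a) '' A) = μ A)

/-- Følner criterion: an amenable group admits, for every finite `S` and `ε > 0`,
a nonempty finite set `A` with `|xA Δ A| ≤ ε·|A|` for all `x ∈ S`. -/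
theorem amenable_folner (Γ : Type*) [Group Γ] [DecidableEq Γ] (hΓ : IsAmenable Γ)
    (S : Finset Γ) (ε : ℝ) (hε : 0 < ε) :
    ∃ A : Finset Γ, A.Nonempty ∧
      ∀ x ∈ S, ((symmDiff (A.image (fun a => x * a)) A).card : ℝ) ≤ ε * A.card := by
  by_contra hcon
  push_neg at hcon
  set T : Finset Γ := insert 1 S with hT
  have hTne : T.Nonempty := ⟨1, Finset.mem_insert_self 1 S⟩
  -- expansion step
  have hexp : ∀ A : Finset Γ, A.Nonempty → (1 + ε/2) * A.card ≤ ((T * A).card : ℝ) := by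
    intro A hA
    obtain ⟨x, hxS, hx⟩ := hcon A hA
    set xA := A.image (fun a => x * a) with hxAdef
    have hcardxA : xA.card = A.card :=
      Finset.card_image_of_injective _ (mul_right_injective x)
    have hsdef : symmDiff xA A = (xA \ A) ∪ (A \ xA) := by
      rw [symmDiff_def]; rfl
    have hscard : (symmDiff xA A).card = (xA \ A).card + (A \ xA).card := by
      rw [hsdef, Finset.card_union_of_disjoint disjoint_sdiff_sdiff]
    have h1 := Finset.card_inter_add_card_sdiff xA A
    have h2 := Finset.card_inter_add_card_sdiff A xA
    rw [Finset.inter_comm] at h1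
    have hssd : (xA \ A).card = (A \ xA).card := by omega
    have hhalf : (ε/2) * A.card < ((xA \ A).card : ℝ) := by
      rw [hscard, hssd] at hx
      rw [hssd]
      push_cast at hx
      linarith
    have hsub : A ∪ xA ⊆ T * A := by
      apply Finset.union_subset
      · intro a ha
        exact Finset.mem_mul.2 ⟨1, Finset.mem_insert_self 1 S, a, ha, one_mul a⟩
      · intro y hy
        obtain ⟨a, ha, rfl⟩ := Finset.mem_image.1 hy
        exact Finset.mem_mul.2 ⟨x, Finset.mem_insert_of_mem hxS, a, ha, rfl⟩
    have hcu : (A ∪ xA).card = A.card + (xA \ A).card := by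
      rw [← Finset.union_sdiff_self_eq_union,
        Finset.card_union_of_disjoint Finset.disjoint_sdiff]
    have hle : ((A ∪ xA).card : ℝ) ≤ ((T * A).card : ℝ) := by
      exact_mod_cast Finset.card_le_card hsub
    rw [hcu] at hle
    push_cast at hle
    linarith
  -- iterated expansion
  have hpow : ∀ n : ℕ, ∀ A : Finset Γ, A.Nonempty →
      (1 + ε/2)^n * A.card ≤ ((T^n * A).card : ℝ) := by
    intro n
    induction n with
    | zero => intro A hA; simp
    | succ n ih =>
      intro A hA
      have hpos : (0:ℝ) < (1 + ε/2)^n * A.card := by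
        have h0 : (0:ℝ) < A.card := by exact_mod_cast Finset.card_pos.2 hA
        positivity
      have hne : (T^n * A).Nonempty := by
        rw [← Finset.card_pos]
        have : (0:ℝ) < ((T^n * A).card : ℝ) := lt_of_lt_of_le hpos (ih A hA)
        exact_mod_cast this
      have hstep := hexp (T^n * A) hne
      have heq : T^(n+1) * A = T * (T^n * A) := by rw [pow_succ', mul_assoc]
      rw [heq]
      calc (1 + ε/2)^(n+1) * A.card = (1 + ε/2) * ((1 + ε/2)^n * A.card) := by ring
        _ ≤ (1 + ε/2) * ((T^n * A).card : ℝ) := by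
            apply mul_le_mul_of_nonneg_left (ih A hA); linarith
        _ ≤ ((T * (T^n * A)).card : ℝ) := hstep
  obtain ⟨n, hn⟩ := pow_unbounded_of_one_lt (2:ℝ) (by linarith : (1:ℝ) < 1 + ε/2)
  set K := T^n with hK
  have hKA : ∀ A : Finset Γ, 2 * A.card ≤ (K * A).card := by
    intro A
    rcases A.eq_empty_or_nonempty with rfl | hA
    · simp
    · have h1 := hpow n A hA
      have hc0 : (0:ℝ) ≤ (A.card : ℝ) := Nat.cast_nonneg _
      have h2 : (2:ℝ) * A.card ≤ ((K * A).card : ℝ) := by nlinarith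
      exact_mod_cast h2
  -- Hall's marriage theorem
  have hHall : ∀ s : Finset (Γ × Fin 2),
      s.card ≤ (s.biUnion (fun p => K.image (fun k => k * p.1))).card := by
    intro s
    set A := s.image Prod.fst with hA
    have h1 : s.card ≤ 2 * A.card := by
      have hsub : s ⊆ A ×ˢ (Finset.univ : Finset (Fin 2)) := by
        intro p hp
        rw [Finset.mem_product]
        exact ⟨Finset.mem_image_of_mem _ hp, Finset.mem_univ _⟩
      calc s.card ≤ (A ×ˢ (Finset.univ : Finset (Fin 2))).card := Finset.card_le_card hsub
        _ = A.card * 2 := by rw [Finset.card_product]; simp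
        _ = 2 * A.card := Nat.mul_comm _ _
    have h2 : K * A ⊆ s.biUnion (fun p => K.image (fun k => k * p.1)) := by
      intro y hy
      obtain ⟨k, hk, a, ha, rfl⟩ := Finset.mem_mul.1 hy
      obtain ⟨p, hp, rfl⟩ := Finset.mem_image.1 ha
      exact Finset.mem_biUnion.2 ⟨p, hp, Finset.mem_image_of_mem _ hk⟩
    calc s.card ≤ 2 * A.card := h1
      _ ≤ (K * A).card := hKA A
      _ ≤ _ := Finset.card_le_card h2
  obtain ⟨f, hfinj, hf⟩ := (Finset.all_card_le_biUnion_card_iff_exists_injective _).1 hHall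
  have hc : ∀ p : Γ × Fin 2, f p * p.1⁻¹ ∈ K := by
    intro p
    obtain ⟨k, hk, hk2⟩ := Finset.mem_image.1 (hf p)
    rw [← hk2]
    simpa using hk
  -- the measure argument
  obtain ⟨μ, hμ1, hμ0, hadd, hinv⟩ := hΓ
  have h0 : μ ∅ = 0 := by
    have h := hadd ∅ ∅ (by simp)
    simp at h
    linarith
  have hmono : ∀ A B : Set Γ, A ⊆ B → μ A ≤ μ B := by
    intro A B hAB
    have h := hadd A (B \ A) disjoint_sdiff_self_right
    rw [Set.union_diff_cancel hAB] at h
    have := hμ0 (B \ A)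
    linarith
  set B : Fin 2 → Γ → Set Γ := fun i k => {γ : Γ | f (γ, i) * γ⁻¹ = k} with hB
  set E : Fin 2 × Γ → Set Γ := fun p => (fun a => p.2 * a) '' B p.1 p.2 with hE
  have hEdisj : ∀ p q : Fin 2 × Γ, p ≠ q → Disjoint (E p) (E q) := by
    rintro ⟨i, k⟩ ⟨j, l⟩ hpq
    rw [Set.disjoint_left]
    rintro y ⟨γ, hγ, rfl⟩ ⟨γ', hγ', heq⟩
    simp only [hB, Set.mem_setOf_eq] at hγ hγ'
    have e : f (γ, i) = f (γ', j) := by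
      have e1 : f (γ, i) = k * γ := by rw [← hγ]; group
      have e2 : f (γ', j) = l * γ' := by rw [← hγ']; group
      simp only at heq
      rw [e1, e2, heq]
    have hpair := hfinj e
    rw [Prod.mk.injEq] at hpair
    obtain ⟨rfl, rfl⟩ := hpair
    exact hpq (by rw [hγ.symm.trans hγ'])
  have hBdisj : ∀ i : Fin 2, ∀ k ∈ K, ∀ l ∈ K, k ≠ l → Disjoint (B i k) (B i l) := by
    intro i k _ l _ hkl
    rw [Set.disjoint_left]
    intro γ h1 h2
    simp only [hB, Set.mem_setOf_eq] at h1 h2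
    exact hkl (h1.symm.trans h2)
  have hcover : ∀ i : Fin 2, (⋃ k ∈ K, B i k) = Set.univ := by
    intro i
    ext γ
    simp only [Set.mem_iUnion, hB, Set.mem_setOf_eq, Set.mem_univ, iff_true]
    exact ⟨f (γ, i) * γ⁻¹, hc (γ, i), rfl⟩
  have hsumi : ∀ i : Fin 2, ∑ k ∈ K, μ (B i k) = 1 := by
    intro i
    rw [← sum_measure_aux μ h0 hadd K (B i) (hBdisj i), hcover i, hμ1]
  have hbig : ∑ p ∈ (Finset.univ : Finset (Fin 2)) ×ˢ K, μ (E p) ≤ 1 := by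
    rw [← sum_measure_aux μ h0 hadd _ E (fun p _ q _ h => hEdisj p q h), ← hμ1]
    exact hmono _ _ (Set.subset_univ _)
  have hμE : ∀ p : Fin 2 × Γ, μ (E p) = μ (B p.1 p.2) := fun p => hinv p.2 _
  rw [Finset.sum_congr rfl (fun p _ => hμE p), Finset.sum_product] at hbig
  have htwo : ∑ i ∈ (Finset.univ : Finset (Fin 2)), ∑ k ∈ K, μ (B i k) = 2 := by
    simp [hsumi]
  simp only at hbig
  rw [htwo] at hbig
  linarith
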